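/- Let n ≥ 1 and let a, b : Fin (n+1) → ℂ with a 0 ≠ 0 and b 0 ≠ 0, and suppose that |a j| ≤ |a 0| and |b j| ≤ |b 0| for all j (i.e., the sup norms of a and b are attained at the index 0). Let A = { v : Fin (n+1) → ℂ | Σ_j a j · v j = 0 } be the hyperplane defined by a. Then for every index i with 1 ≤ i ≤ n there exists a nonzero vector v ∈ A, namely v = (a 0) • e_i − (a i) • e_0 (where e_k is the k-th standard basis vector), such that ‖v‖_∞ = |a 0| and |Σ_j b j · v j| / (|b 0| · ‖v‖_∞) = |a i / a 0 − b i / b 0|. Consequently, the supremum over nonzero v ∈ A of |Σ_j b j · v j| / (|b 0| · ‖v‖_∞) is at least max over 1 ≤ i ≤ n of |a i / a 0 − b i / b 0|. -/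

import Mathlib

/-- Content of the proof of Lemma 3.7: for covectors `a, b` on `ℂ^{n+1}` whose sup norms
are attained at the index `0`, for every index `i ≠ 0` the vector
`v = a 0 • e_i − a i • e_0` is a nonzero vector of the hyperplane `A = {v | Σ a j · v j = 0}`
with `‖v‖ = |a 0|` and `|Σ b j · v j| / (|b 0|·‖v‖) = |a i / a 0 − b i / b 0|`; consequently
the supremum of this ratio over nonzero `v ∈ A` is at least `max_i |a i / a 0 − b i / b 0|`. -/
theorem hyperplane_distance_lower_bound {n : ℕ} (hn : 1 ≤ n) (a b : Fin (n + 1) → ℂ)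
    (ha0 : a 0 ≠ 0) (hb0 : b 0 ≠ 0)
    (ha : ∀ j, ‖a j‖ ≤ ‖a 0‖)
    (hb : ∀ j, ‖b j‖ ≤ ‖b 0‖) :
    (∀ i : Fin (n + 1), i ≠ 0 →
      ∀ v : Fin (n + 1) → ℂ,
        v = a 0 • (Pi.single i 1 : Fin (n + 1) → ℂ) -
              a i • (Pi.single 0 1 : Fin (n + 1) → ℂ) →
        v ≠ 0 ∧ (∑ j, a j * v j) = 0 ∧ ‖v‖ = ‖a 0‖ ∧
          ‖∑ j, b j * v j‖ / (‖b 0‖ * ‖v‖) =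
            ‖a i / a 0 - b i / b 0‖) ∧
    ∀ i : Fin (n + 1), i ≠ 0 →
      ‖a i / a 0 - b i / b 0‖ ≤
        sSup {r : ℝ | ∃ v : Fin (n + 1) → ℂ, v ≠ 0 ∧ (∑ j, a j * v j) = 0 ∧
          r = ‖∑ j, b j * v j‖ / (‖b 0‖ * ‖v‖)} := by
  have key : ∀ i : Fin (n + 1), i ≠ 0 →
      ∀ v : Fin (n + 1) → ℂ,
        v = a 0 • (Pi.single i 1 : Fin (n + 1) → ℂ) -
              a i • (Pi.single 0 1 : Fin (n + 1) → ℂ) →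
        v ≠ 0 ∧ (∑ j, a j * v j) = 0 ∧ ‖v‖ = ‖a 0‖ ∧
          ‖∑ j, b j * v j‖ / (‖b 0‖ * ‖v‖) =
            ‖a i / a 0 - b i / b 0‖ := by
    intro i hi v hv
    have hvi : v i = a 0 := by
      simp [hv, Pi.single_apply, hi]
    have hv0 : v 0 = -a i := by
      simp [hv, Pi.single_apply, hi, Ne.symm hi]
    have hvj : ∀ j, j ≠ i → j ≠ 0 → v j = 0 := by
      intro j h1 h2
      simp [hv, Pi.single_apply, h1, h2]
    have hvne : v ≠ 0 := by
      intro h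
      apply ha0
      have := congrFun h i
      rwa [hvi] at this
    have hsum : ∀ c : Fin (n+1) → ℂ, (∑ j, c j * v j) = c i * a 0 - c 0 * a i := by
      intro c
      subst hv
      simp [Pi.single_apply, mul_sub, Finset.sum_sub_distrib, mul_ite,
        Finset.sum_ite_eq']
    have hnorm : ‖v‖ = ‖a 0‖ := by
      apply le_antisymm
      · apply pi_norm_le_iff_of_nonneg (by positivity) |>.2
        intro j
        rcases eq_or_ne j i with rfl | h1
        · simp [hvi]
        rcases eq_or_ne j 0 with rfl | h2
        · simpa [hv0] using ha i
        · simp [hvj j h1 h2]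
      · calc ‖a 0‖ = ‖v i‖ := by simp [hvi]
          _ ≤ ‖v‖ := norm_le_pi_norm v i
    refine ⟨hvne, ?_, hnorm, ?_⟩
    · rw [hsum]; ring
    · rw [hsum, hnorm]
      have h2 : a i / a 0 - b i / b 0 = -(b i * a 0 - b 0 * a i) / (a 0 * b 0) := by
        field_simp
        ring
      rw [h2, norm_div, norm_neg, norm_mul, mul_comm ‖a 0‖]
  refine ⟨key, ?_⟩
  intro i hi
  obtain ⟨hvne, hmem, hnorm, heq⟩ := key i hi _ rfl
  rw [← heq]
  apply le_csSup
  · refine ⟨(n + 1 : ℝ), ?_⟩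
    rintro r ⟨w, hw, -, rfl⟩
    have hwpos : 0 < ‖w‖ := norm_pos_iff.mpr hw
    rw [div_le_iff₀ (mul_pos (norm_pos_iff.mpr hb0) hwpos)]
    calc ‖∑ j, b j * w j‖ ≤ ∑ j, ‖b j * w j‖ :=
          norm_sum_le _ _
      _ ≤ ∑ _j : Fin (n + 1), ‖b 0‖ * ‖w‖ := by
          refine Finset.sum_le_sum fun j _ => ?_
          rw [norm_mul]
          exact mul_le_mul (hb j) (norm_le_pi_norm w j) (by positivity) (by positivity)
      _ = (n + 1 : ℝ) * (‖b 0‖ * ‖w‖) := by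
          simp [Finset.sum_const, Finset.card_univ]
  · exact ⟨_, hvne, hmem, rfl⟩
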